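/- arXiv:2404.16059 — 2 statements merged into one kernel-verified Lean document; each statement's English description precedes it below -/
import Mathlib

section
/- Let T, G be bounded linear operators on a Hilbert space H with G having closed range. Then range(T) ⊆ range(G) if and only if there exists α > 0 such that α‖T*x‖² ≤ ‖G*x‖² for all x ∈ H. -/
/-!
If `range T ⊆ range G` and `range G` is closed, the open mapping theorem gives preimages
`G v = T x` with `‖v‖ ≤ C‖x‖`; applied to `x = T* y` this yields
`‖T* y‖² = ⟪G* y, v⟫ ≤ C ‖T‖ ‖G* y‖ ‖T* y‖`.
Conversely the inequality forces `ker G* ⊆ ker T*`, and taking orthogonal complements,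
`range T ⊆ (ker T*)ᗮ ⊆ (ker G*)ᗮ = closure (range G) = range G`.
-/

open ContinuousLinearMap RCLike

namespace ContinuousLinearMap

theorem exists_preimage_norm_le_of_isClosed_range {𝕜 E F : Type*} [NontriviallyNormedField 𝕜]
    [NormedAddCommGroup E] [NormedSpace 𝕜 E] [CompleteSpace E]
    [NormedAddCommGroup F] [NormedSpace 𝕜 F] [CompleteSpace F]
    (G : E →L[𝕜] F) (hG : IsClosed (Set.range G)) :
    ∃ C > 0, ∀ y ∈ Set.range G, ∃ x, G x = y ∧ ‖x‖ ≤ C * ‖y‖ := by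
  have : CompleteSpace G.range := hG.completeSpace_coe
  obtain ⟨C, hC, hpre⟩ := G.rangeRestrict.exists_preimage_norm_le G.surjective_rangeRestrict
  refine ⟨C, hC, ?_⟩
  rintro _ ⟨x, rfl⟩
  obtain ⟨v, hv, hvC⟩ := hpre (G.rangeRestrict x)
  exact ⟨v, congrArg Subtype.val hv, hvC⟩

variable {𝕜 E E' F : Type*} [RCLike 𝕜]
  [NormedAddCommGroup E] [InnerProductSpace 𝕜 E] [CompleteSpace E]
  [NormedAddCommGroup E'] [InnerProductSpace 𝕜 E'] [CompleteSpace E']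
  [NormedAddCommGroup F] [InnerProductSpace 𝕜 F] [CompleteSpace F]

theorem norm_adjoint_le_of_forall_exists_preimage {T : E →L[𝕜] F} {G : E' →L[𝕜] F} {C : ℝ}
    (hC : 0 ≤ C) (h : ∀ x, ∃ v, G v = T x ∧ ‖v‖ ≤ C * ‖x‖) (y : F) :
    ‖adjoint T y‖ ≤ C * ‖adjoint G y‖ := by
  set u := adjoint T y
  obtain ⟨v, hGv, hv⟩ := h u
  have key : ‖u‖ * ‖u‖ ≤ C * ‖adjoint G y‖ * ‖u‖ :=
    calc ‖u‖ * ‖u‖ = re (inner 𝕜 u u) := (inner_self_eq_norm_mul_norm u).symm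
      _ ≤ ‖inner 𝕜 (adjoint T y) u‖ := re_le_norm _
      _ = ‖inner 𝕜 (adjoint G y) v‖ := by rw [adjoint_inner_left, adjoint_inner_left, hGv]
      _ ≤ ‖adjoint G y‖ * ‖v‖ := norm_inner_le_norm _ _
      _ ≤ ‖adjoint G y‖ * (C * ‖u‖) := by gcongr
      _ = C * ‖adjoint G y‖ * ‖u‖ := by ring
  rcases (norm_nonneg u).eq_or_lt with hu | hu
  · rw [← hu]; positivity
  · exact le_of_mul_le_mul_right key hu

theorem range_le_range_iff_ker_adjoint_le {T : E →L[𝕜] F} {G : E' →L[𝕜] F}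
    (hG : IsClosed (Set.range G)) : T.range ≤ G.range ↔ (adjoint G).ker ≤ (adjoint T).ker := by
  rw [← orthogonal_range, ← orthogonal_range]
  refine ⟨Submodule.orthogonal_le, fun h => ?_⟩
  calc T.range ≤ T.rangeᗮᗮ := T.range.le_orthogonal_orthogonal
    _ ≤ G.rangeᗮᗮ := Submodule.orthogonal_le h
    _ = G.range := by
      rw [Submodule.orthogonal_orthogonal_eq_closure, IsClosed.submodule_topologicalClosure_eq hG]

theorem exists_norm_adjoint_le_of_range_subset {T : E →L[𝕜] F} {G : E' →L[𝕜] F}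
    (hG : IsClosed (Set.range G)) (hTG : Set.range T ⊆ Set.range G) :
    ∃ C > 0, ∀ y, ‖adjoint T y‖ ≤ C * ‖adjoint G y‖ := by
  obtain ⟨C, hC, hpre⟩ := G.exists_preimage_norm_le_of_isClosed_range hG
  refine ⟨C * ‖T‖ + 1, by positivity, norm_adjoint_le_of_forall_exists_preimage (by positivity) ?_⟩
  intro x
  obtain ⟨v, hGv, hv⟩ := hpre (T x) (hTG ⟨x, rfl⟩)
  refine ⟨v, hGv, hv.trans ?_⟩
  calc C * ‖T x‖ ≤ C * (‖T‖ * ‖x‖) := by gcongr; exact T.le_opNorm x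
    _ ≤ (C * ‖T‖ + 1) * ‖x‖ := by nlinarith [norm_nonneg x]

end ContinuousLinearMap

theorem range_inclusion_iff_norm_ineq
    {H : Type*} [NormedAddCommGroup H] [InnerProductSpace ℂ H] [CompleteSpace H]
    (T G : H →L[ℂ] H) (hG : IsClosed (Set.range G)) :
    Set.range T ⊆ Set.range G ↔
      ∃ α : ℝ, 0 < α ∧ ∀ x : H,
        α * ‖ContinuousLinearMap.adjoint T x‖^2 ≤ ‖ContinuousLinearMap.adjoint G x‖^2 := by
  constructor
  · intro hTG
    obtain ⟨C, hC, hle⟩ := exists_norm_adjoint_le_of_range_subset hG hTG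
    refine ⟨C⁻¹ ^ 2, by positivity, fun x => ?_⟩
    calc C⁻¹ ^ 2 * ‖adjoint T x‖ ^ 2 = (C⁻¹ * ‖adjoint T x‖) ^ 2 := by ring
      _ ≤ ‖adjoint G x‖ ^ 2 := by
        gcongr
        rw [inv_mul_le_iff₀ hC]
        exact hle x
  · rintro ⟨α, hα, hineq⟩
    suffices (adjoint G).ker ≤ (adjoint T).ker from
      SetLike.coe_subset_coe.mpr ((range_le_range_iff_ker_adjoint_le hG).mpr this)
    intro y hy
    have hGy : adjoint G y = 0 := hy
    have hTy : α * ‖adjoint T y‖ ^ 2 ≤ 0 := by simpa [hGy] using hineq y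
    have hTy' : ‖adjoint T y‖ ^ 2 ≤ 0 := nonpos_of_mul_nonpos_right hTy hα
    simpa using hTy'
end

section
/- Let T ∈ L(H) have closed range and satisfy T² = T. Then the Moore–Penrose inverse of T equals the composition P_{range(T*)} P_{range(T)} of the orthogonal projections onto range(T*) and range(T): T† = P_{range(T*)} ∘ P_{range(T)}. -/
open ContinuousLinearMap

/-- `Td` is the Moore–Penrose inverse of `T`. -/
def IsMoorePenrose {H : Type*} [NormedAddCommGroup H] [InnerProductSpace ℂ H]
    [CompleteSpace H] (T Td : H →L[ℂ] H) : Prop :=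
  T ∘L Td ∘L T = T ∧ Td ∘L T ∘L Td = Td ∧
    IsSelfAdjoint (T ∘L Td) ∧ IsSelfAdjoint (Td ∘L T)

/-- `P` is the orthogonal projection of `H` onto the subspace `E`. -/
def IsOrthoProjOnto {H : Type*} [NormedAddCommGroup H] [InnerProductSpace ℂ H]
    [CompleteSpace H] (P : H →L[ℂ] H) (E : Submodule ℂ H) : Prop :=
  ∀ x : H, P x ∈ E ∧ x - P x ∈ Eᗮ

/-!
The Penrose equations make `T ∘L Td` and `Td ∘L T` self-adjoint idempotents with ranges `range T`
and `range T*`, so by uniqueness of orthogonal projections `P = T Td` and `Q = Td T`. Hence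
`Td = Td T Td = Td T² Td = Q P`.
-/

theorem LinearMap.range_comp_eq_of_comp_comp_eq {R M N : Type*} [Semiring R]
    [AddCommMonoid M] [AddCommMonoid N] [Module R M] [Module R N]
    {f : M →ₗ[R] N} {g : N →ₗ[R] M} (h : f ∘ₗ g ∘ₗ f = f) :
    LinearMap.range (f ∘ₗ g) = LinearMap.range f :=
  le_antisymm (LinearMap.range_comp_le_range g f) <| by
    rintro _ ⟨x, rfl⟩
    exact ⟨f x, LinearMap.congr_fun h x⟩

section

variable {H : Type*} [NormedAddCommGroup H] [InnerProductSpace ℂ H] [CompleteSpace H]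

theorem IsOrthoProjOnto.eq {P P' : H →L[ℂ] H} {E : Submodule ℂ H}
    (hP : IsOrthoProjOnto P E) (hP' : IsOrthoProjOnto P' E) : P = P' := by
  ext x
  have hmem : P x - P' x ∈ E := E.sub_mem (hP x).1 (hP' x).1
  have hmem_orth : P x - P' x ∈ Eᗮ := by
    simpa only [sub_sub_sub_cancel_left] using Eᗮ.sub_mem (hP' x).2 (hP x).2
  exact sub_eq_zero.mp <| inner_self_eq_zero.mp <|
    (Submodule.mem_orthogonal E _).mp hmem_orth _ hmem

theorem IsSelfAdjoint.isOrthoProjOnto_range {E : H →L[ℂ] H} (hE : IsSelfAdjoint E)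
    (hidem : E ∘L E = E) : IsOrthoProjOnto E (LinearMap.range (E : H →ₗ[ℂ] H)) := by
  refine fun x => ⟨⟨x, rfl⟩, ?_⟩
  rw [Submodule.mem_orthogonal]
  rintro _ ⟨y, rfl⟩
  have hEE : E (E x) = E x := congr($hidem x)
  have hsymm : ∀ u v, inner ℂ (E u) v = inner ℂ u (E v) := hE.isSymmetric
  rw [coe_coe, inner_sub_right, hsymm, hsymm, hEE, sub_self]

theorem IsMoorePenrose.adjoint {T Td : H →L[ℂ] H} (h : IsMoorePenrose T Td) :
    IsMoorePenrose (ContinuousLinearMap.adjoint T) (ContinuousLinearMap.adjoint Td) := by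
  obtain ⟨hTTdT, hTdTTd, hTTd, hTdT⟩ := h
  refine ⟨?_, ?_, ?_, ?_⟩
  · simpa only [adjoint_comp, comp_assoc] using congr(ContinuousLinearMap.adjoint $hTTdT)
  · simpa only [adjoint_comp, comp_assoc] using congr(ContinuousLinearMap.adjoint $hTdTTd)
  · rw [← adjoint_comp]
    exact IsSelfAdjoint.star_iff.mpr hTdT
  · rw [← adjoint_comp]
    exact IsSelfAdjoint.star_iff.mpr hTTd

theorem IsMoorePenrose.isOrthoProjOnto_range {T Td : H →L[ℂ] H} (h : IsMoorePenrose T Td) :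
    IsOrthoProjOnto (T ∘L Td) (LinearMap.range (T : H →ₗ[ℂ] H)) := by
  obtain ⟨hTTdT, -, hTTd, -⟩ := h
  have hidem : (T ∘L Td) ∘L (T ∘L Td) = T ∘L Td := by
    rw [← comp_assoc, comp_assoc T Td T, hTTdT]
  have hrange := LinearMap.range_comp_eq_of_comp_comp_eq (f := (T : H →ₗ[ℂ] H)) (g := Td)
    congr(ContinuousLinearMap.toLinearMap $hTTdT)
  rw [← hrange]
  exact hTTd.isOrthoProjOnto_range hidem

theorem IsMoorePenrose.isOrthoProjOnto_range_adjoint {T Td : H →L[ℂ] H}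
    (h : IsMoorePenrose T Td) :
    IsOrthoProjOnto (Td ∘L T)
      (LinearMap.range ((ContinuousLinearMap.adjoint T : H →L[ℂ] H) : H →ₗ[ℂ] H)) := by
  -- `Td T = (Td T)* = T* Td*`, and `(T*, Td*)` is again a Moore–Penrose pair.
  rw [← h.2.2.2.adjoint_eq, adjoint_comp]
  exact h.adjoint.isOrthoProjOnto_range

end

theorem MP_of_idempotent_general
    {H : Type*} [NormedAddCommGroup H] [InnerProductSpace ℂ H] [CompleteSpace H]
    (T Td P Q : H →L[ℂ] H)
    (hidem : T ∘L T = T) (hMP : IsMoorePenrose T Td)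
    (hP : IsOrthoProjOnto P (LinearMap.range (T : H →ₗ[ℂ] H)))
    (hQ : IsOrthoProjOnto Q (LinearMap.range ((adjoint T : H →L[ℂ] H) : H →ₗ[ℂ] H))) :
    Td = Q ∘L P := by
  rw [hP.eq hMP.isOrthoProjOnto_range, hQ.eq hMP.isOrthoProjOnto_range_adjoint]
  calc Td = Td ∘L T ∘L Td := hMP.2.1.symm
    _ = Td ∘L (T ∘L T) ∘L Td := by rw [hidem]
    _ = (Td ∘L T) ∘L (T ∘L Td) := by simp only [comp_assoc]

theorem MP_of_idempotent
    {H : Type*} [NormedAddCommGroup H] [InnerProductSpace ℂ H] [CompleteSpace H]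
    (T Td P Q : H →L[ℂ] H) (hcl : IsClosed (Set.range T))
    (hidem : T ∘L T = T) (hMP : IsMoorePenrose T Td)
    (hP : IsOrthoProjOnto P (LinearMap.range (T : H →ₗ[ℂ] H)))
    (hQ : IsOrthoProjOnto Q (LinearMap.range ((adjoint T : H →L[ℂ] H) : H →ₗ[ℂ] H))) :
    Td = Q ∘L P :=
  MP_of_idempotent_general T Td P Q hidem hMP hP hQ
end
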